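/- arXiv:1109.0399 — 2 statements merged into one kernel-verified Lean document; each statement's English description precedes it below -/
import Mathlib

section
/- Let n = 4. For both 4-cycles w = (1324) and w = (1423) in S_4, the tangent cone C_w of the Schubert variety of w at the origin equals {x ∈ n_- : x_{41} = 0}. -/
open Matrix MvPolynomial

/-- Evaluation of a polynomial in the matrix-entry variables at a matrix. -/
noncomputable def evalMat {K : Type} [Field K] {n : ℕ}
    (m : Matrix (Fin n) (Fin n) K) (f : MvPolynomial (Fin n × Fin n) K) : K :=
  MvPolynomial.eval (fun p => m p.1 p.2) f

/-- Zariski closure of a set of matrices: the zero locus of its vanishing ideal. -/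
def zClosure {K : Type} [Field K] {n : ℕ} (S : Set (Matrix (Fin n) (Fin n) K)) :
    Set (Matrix (Fin n) (Fin n) K) :=
  {m | ∀ f : MvPolynomial (Fin n × Fin n) K,
      (∀ s ∈ S, evalMat s f = 0) → evalMat m f = 0}

/-- The group `B` of invertible upper triangular matrices. -/
def upperB (K : Type) [Field K] (n : ℕ) : Set (Matrix (Fin n) (Fin n) K) :=
  {b | IsUnit b ∧ ∀ i j : Fin n, j < i → b i j = 0}

/-- The permutation matrix of `w`. -/
def permMat (K : Type) [Field K] {n : ℕ} (w : Equiv.Perm (Fin n)) :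
    Matrix (Fin n) (Fin n) K :=
  Matrix.of fun i j => if w j = i then 1 else 0

/-- The space `n₋` of strictly lower triangular matrices. -/
def lowerNil (K : Type) [Field K] (n : ℕ) : Set (Matrix (Fin n) (Fin n) K) :=
  {x | ∀ i j : Fin n, i ≤ j → x i j = 0}

/-- The Bruhat double coset `B ŵ B`. -/
def bruhatCell {K : Type} [Field K] {n : ℕ} (w : Equiv.Perm (Fin n)) :
    Set (Matrix (Fin n) (Fin n) K) :=
  {m | ∃ b₁ ∈ upperB K n, ∃ b₂ ∈ upperB K n, m = b₁ * permMat K w * b₂}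

/-- The affine part `Ω_w` of the Schubert variety of `w`. -/
def schubertAffine {K : Type} [Field K] {n : ℕ} (w : Equiv.Perm (Fin n)) :
    Set (Matrix (Fin n) (Fin n) K) :=
  {x ∈ lowerNil K n | (1 + x) ∈ zClosure (bruhatCell w)}

/-- The tangent cone `C_w` at the origin: the common zeroes in `n₋` of the lowest
forms of all nonzero polynomials in the vanishing ideal of `Ω_w`.  (A nonzero `f`
has a unique `d` such that all homogeneous components below `d` vanish while the
component in degree `d` is nonzero; that component is the lowest form `f₀`.) -/
def tangentCone {K : Type} [Field K] {n : ℕ} (w : Equiv.Perm (Fin n)) :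
    Set (Matrix (Fin n) (Fin n) K) :=
  {x ∈ lowerNil K n | ∀ f : MvPolynomial (Fin n × Fin n) K,
      (∀ s ∈ schubertAffine w, evalMat s f = 0) →
      ∀ d : ℕ, (∀ e < d, MvPolynomial.homogeneousComponent e f = 0) →
        MvPolynomial.homogeneousComponent d f ≠ 0 →
        evalMat x (MvPolynomial.homogeneousComponent d f) = 0}


theorem permMat1 {K : Type} [Field K] :
    permMat K (c[0, 2, 1, 3] : Equiv.Perm (Fin 4)) =
      !![0,0,0,1; 0,0,1,0; 1,0,0,0; 0,1,0,0] := by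
  ext i j
  fin_cases i <;> fin_cases j <;>
    simp [permMat, Matrix.vecHead, Matrix.vecTail] <;> decide

theorem upperTri_mem {K : Type} [Field K] (A : Matrix (Fin 4) (Fin 4) K)
    (h10 : A 1 0 = 0) (h20 : A 2 0 = 0) (h30 : A 3 0 = 0)
    (h21 : A 2 1 = 0) (h31 : A 3 1 = 0) (h32 : A 3 2 = 0)
    (hdet : IsUnit A.det) : A ∈ upperB K 4 := by
  refine ⟨(Matrix.isUnit_iff_isUnit_det A).mpr hdet, ?_⟩
  intro i j hij
  fin_cases i <;> fin_cases j <;> first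
    | exact absurd hij (by decide)
    | assumption

theorem blockTri {K : Type} [Field K] (A : Matrix (Fin 4) (Fin 4) K)
    (h10 : A 1 0 = 0) (h20 : A 2 0 = 0) (h30 : A 3 0 = 0)
    (h21 : A 2 1 = 0) (h31 : A 3 1 = 0) (h32 : A 3 2 = 0) :
    A.BlockTriangular id := by
  intro i j hij
  fin_cases i <;> fin_cases j <;> first
    | exact absurd hij (by decide)
    | assumption

theorem detTri {K : Type} [Field K] (A : Matrix (Fin 4) (Fin 4) K)
    (h10 : A 1 0 = 0) (h20 : A 2 0 = 0) (h30 : A 3 0 = 0)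
    (h21 : A 2 1 = 0) (h31 : A 3 1 = 0) (h32 : A 3 2 = 0) :
    A.det = A 0 0 * A 1 1 * A 2 2 * A 3 3 := by
  rw [Matrix.det_of_upperTriangular (blockTri A h10 h20 h30 h21 h31 h32), Fin.prod_univ_four]

set_option maxHeartbeats 1000000 in
theorem cellMem1 {K : Type} [Field K] (a b c e f : K) (hb : b ≠ 0) (he : e ≠ 0)
    (hD : a*c*f - a*e - b*f ≠ 0) :
    (!![(1:K),0,0,0; a,1,0,0; b,c,1,0; 0,e,f,1]) ∈
      bruhatCell (K := K) (c[0, 2, 1, 3] : Equiv.Perm (Fin 4)) := by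
  refine ⟨!![1, -((e-f*c)/(a*c*f-a*e-b*f)),
             ((e-f*c)/(a*c*f-a*e-b*f))*(-(a/b)) - f/(a*c*f-a*e-b*f),
             ((e-f*c)/(a*c*f-a*e-b*f))*((a*c-b)/(b*e)) - (-(1/(a*c*f-a*e-b*f)));
           0,1,a/b,-((a*c-b)/(b*e)); 0,0,1,0; 0,0,0,1], ?_,
          !![b,c,1,0; 0,e,f,1; 0,0,(a*c*f-a*e-b*f)/(b*e),(a*c-b)/(b*e);
             0,0,0,-(1/(a*c*f-a*e-b*f))], ?_, ?_⟩
  · refine upperTri_mem _ (by simp [Matrix.vecHead, Matrix.vecTail]) (by simp [Matrix.vecHead, Matrix.vecTail]) (by simp [Matrix.vecHead, Matrix.vecTail])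
      (by simp [Matrix.vecHead, Matrix.vecTail]) (by simp [Matrix.vecHead, Matrix.vecTail])
      (by simp [Matrix.vecHead, Matrix.vecTail]) ?_
    rw [detTri _ (by simp [Matrix.vecHead, Matrix.vecTail]) (by simp [Matrix.vecHead, Matrix.vecTail]) (by simp [Matrix.vecHead, Matrix.vecTail]) (by simp [Matrix.vecHead, Matrix.vecTail])
      (by simp [Matrix.vecHead, Matrix.vecTail]) (by simp [Matrix.vecHead, Matrix.vecTail])]
    simp [Matrix.vecHead, Matrix.vecTail]
  · refine upperTri_mem _ (by simp [Matrix.vecHead, Matrix.vecTail]) (by simp [Matrix.vecHead, Matrix.vecTail]) (by simp [Matrix.vecHead, Matrix.vecTail])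
      (by simp [Matrix.vecHead, Matrix.vecTail]) (by simp [Matrix.vecHead, Matrix.vecTail])
      (by simp [Matrix.vecHead, Matrix.vecTail]) ?_
    rw [detTri _ (by simp [Matrix.vecHead, Matrix.vecTail]) (by simp [Matrix.vecHead, Matrix.vecTail]) (by simp [Matrix.vecHead, Matrix.vecTail]) (by simp [Matrix.vecHead, Matrix.vecTail])
      (by simp [Matrix.vecHead, Matrix.vecTail]) (by simp [Matrix.vecHead, Matrix.vecTail])]
    simp [Matrix.vecHead, Matrix.vecTail, isUnit_iff_ne_zero]
    tauto
  · rw [permMat1]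
    have hU : (!![1, -((e-f*c)/(a*c*f-a*e-b*f)),
             ((e-f*c)/(a*c*f-a*e-b*f))*(-(a/b)) - f/(a*c*f-a*e-b*f),
             ((e-f*c)/(a*c*f-a*e-b*f))*((a*c-b)/(b*e)) - (-(1/(a*c*f-a*e-b*f)));
           0,1,a/b,-((a*c-b)/(b*e)); 0,0,1,0; 0,0,0,1] : Matrix (Fin 4) (Fin 4) K) *
        !![1, (e-f*c)/(a*c*f-a*e-b*f), f/(a*c*f-a*e-b*f), -(1/(a*c*f-a*e-b*f));
           0,1,-(a/b),(a*c-b)/(b*e); 0,0,1,0; 0,0,0,1] = 1 := by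
      ext i j
      fin_cases i <;> fin_cases j <;>
        simp [Matrix.mul_apply, Fin.sum_univ_four, Matrix.vecHead, Matrix.vecTail,
          Matrix.one_apply] <;> ring
    have hUM : (!![1, (e-f*c)/(a*c*f-a*e-b*f), f/(a*c*f-a*e-b*f), -(1/(a*c*f-a*e-b*f));
           0,1,-(a/b),(a*c-b)/(b*e); 0,0,1,0; 0,0,0,1] : Matrix (Fin 4) (Fin 4) K) *
        !![(1:K),0,0,0; a,1,0,0; b,c,1,0; 0,e,f,1] =
        (!![(0:K),0,0,1; 0,0,1,0; 1,0,0,0; 0,1,0,0]) *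
        !![b,c,1,0; 0,e,f,1; 0,0,(a*c*f-a*e-b*f)/(b*e),(a*c-b)/(b*e);
           0,0,0,-(1/(a*c*f-a*e-b*f))] := by
      ext i j
      fin_cases i <;> fin_cases j <;>
        simp [Matrix.mul_apply, Fin.sum_univ_four, Matrix.vecHead, Matrix.vecTail] <;>
        field_simp <;> grind
    calc (!![(1:K),0,0,0; a,1,0,0; b,c,1,0; 0,e,f,1])
        = (!![1, -((e-f*c)/(a*c*f-a*e-b*f)),
             ((e-f*c)/(a*c*f-a*e-b*f))*(-(a/b)) - f/(a*c*f-a*e-b*f),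
             ((e-f*c)/(a*c*f-a*e-b*f))*((a*c-b)/(b*e)) - (-(1/(a*c*f-a*e-b*f)));
           0,1,a/b,-((a*c-b)/(b*e)); 0,0,1,0; 0,0,0,1] *
           !![1, (e-f*c)/(a*c*f-a*e-b*f), f/(a*c*f-a*e-b*f), -(1/(a*c*f-a*e-b*f));
           0,1,-(a/b),(a*c-b)/(b*e); 0,0,1,0; 0,0,0,1]) *
          !![(1:K),0,0,0; a,1,0,0; b,c,1,0; 0,e,f,1] := by rw [hU, Matrix.one_mul]
      _ = _ := by rw [Matrix.mul_assoc, hUM, ← Matrix.mul_assoc]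

theorem permMat2 {K : Type} [Field K] :
    permMat K (c[0, 3, 1, 2] : Equiv.Perm (Fin 4)) =
      !![0,0,1,0; 0,0,0,1; 0,1,0,0; 1,0,0,0] := by
  ext i j
  fin_cases i <;> fin_cases j <;>
    simp [permMat, Matrix.vecHead, Matrix.vecTail] <;> decide

set_option maxHeartbeats 2000000 in
theorem cellMem2 {K : Type} [Field K] (a b c e f : K)
    (hd : a*e+b*f-a*c*f ≠ 0) (h1 : c*(a*e+b*f-a*c*f) - b*e ≠ 0)
    (h2 : f*c - e ≠ 0) (h3 : a*c - b ≠ 0) :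
    (!![(1:K),0,0,0; a,1,0,0; b,c,1,0; (a*e+b*f-a*c*f),e,f,1]) ∈ bruhatCell (K := K) (c[0, 3, 1, 2] : Equiv.Perm (Fin 4)) := by
  refine ⟨!![1, -(-(c/(a*c-b))), -(1/(a*c-b))+(-(c/(a*c-b)))*(-(f/(f*c-e))), (-(c/(a*c-b)))*(1/(f*c-e))+(1/(a*c-b))*(-(b/(a*e+b*f-a*c*f)))-(-(c/(a*c-b)))*(-(f/(f*c-e)))*(-(b/(a*e+b*f-a*c*f))); 0,1,-(-(f/(f*c-e))),-(1/(f*c-e))+(-(f/(f*c-e)))*(-(b/(a*e+b*f-a*c*f))); 0,0,1,-(-(b/(a*e+b*f-a*c*f))); 0,0,0,1], ?_, !![(a*e+b*f-a*c*f),e,f,1; 0,(c*(a*e+b*f-a*c*f)-b*e)/(a*e+b*f-a*c*f),((a*e+b*f-a*c*f)-b*f)/(a*e+b*f-a*c*f),-(b/(a*e+b*f-a*c*f)); 0,0,(1/(a*c-b)),0; 0,0,0,(1/(f*c-e))], ?_, ?_⟩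
  · refine upperTri_mem _ (by simp [Matrix.vecHead, Matrix.vecTail]) (by simp [Matrix.vecHead, Matrix.vecTail]) (by simp [Matrix.vecHead, Matrix.vecTail]) (by simp [Matrix.vecHead, Matrix.vecTail]) (by simp [Matrix.vecHead, Matrix.vecTail]) (by simp [Matrix.vecHead, Matrix.vecTail]) ?_
    rw [detTri _ (by simp [Matrix.vecHead, Matrix.vecTail]) (by simp [Matrix.vecHead, Matrix.vecTail]) (by simp [Matrix.vecHead, Matrix.vecTail]) (by simp [Matrix.vecHead, Matrix.vecTail]) (by simp [Matrix.vecHead, Matrix.vecTail]) (by simp [Matrix.vecHead, Matrix.vecTail])]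
    simp [Matrix.vecHead, Matrix.vecTail]
  · refine upperTri_mem _ (by simp [Matrix.vecHead, Matrix.vecTail]) (by simp [Matrix.vecHead, Matrix.vecTail]) (by simp [Matrix.vecHead, Matrix.vecTail]) (by simp [Matrix.vecHead, Matrix.vecTail]) (by simp [Matrix.vecHead, Matrix.vecTail]) (by simp [Matrix.vecHead, Matrix.vecTail]) ?_
    rw [detTri _ (by simp [Matrix.vecHead, Matrix.vecTail]) (by simp [Matrix.vecHead, Matrix.vecTail]) (by simp [Matrix.vecHead, Matrix.vecTail]) (by simp [Matrix.vecHead, Matrix.vecTail]) (by simp [Matrix.vecHead, Matrix.vecTail]) (by simp [Matrix.vecHead, Matrix.vecTail])]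
    simp_all [Matrix.vecHead, Matrix.vecTail, isUnit_iff_ne_zero, sub_eq_zero]
  · rw [permMat2]
    have hU : (!![1, -(-(c/(a*c-b))), -(1/(a*c-b))+(-(c/(a*c-b)))*(-(f/(f*c-e))), (-(c/(a*c-b)))*(1/(f*c-e))+(1/(a*c-b))*(-(b/(a*e+b*f-a*c*f)))-(-(c/(a*c-b)))*(-(f/(f*c-e)))*(-(b/(a*e+b*f-a*c*f))); 0,1,-(-(f/(f*c-e))),-(1/(f*c-e))+(-(f/(f*c-e)))*(-(b/(a*e+b*f-a*c*f))); 0,0,1,-(-(b/(a*e+b*f-a*c*f))); 0,0,0,1] : Matrix (Fin 4) (Fin 4) K) * !![1, (-(c/(a*c-b))), (1/(a*c-b)), 0; 0,1,(-(f/(f*c-e))),(1/(f*c-e)); 0,0,1,(-(b/(a*e+b*f-a*c*f))); 0,0,0,1] = 1 := by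
      ext i j
      fin_cases i <;> fin_cases j <;>
        simp [Matrix.mul_apply, Fin.sum_univ_four, Matrix.vecHead, Matrix.vecTail,
          Matrix.one_apply] <;> ring
    have hUM : (!![1, (-(c/(a*c-b))), (1/(a*c-b)), 0; 0,1,(-(f/(f*c-e))),(1/(f*c-e)); 0,0,1,(-(b/(a*e+b*f-a*c*f))); 0,0,0,1] : Matrix (Fin 4) (Fin 4) K) * !![(1:K),0,0,0; a,1,0,0; b,c,1,0; (a*e+b*f-a*c*f),e,f,1] = (!![(0:K),0,1,0; 0,0,0,1; 0,1,0,0; 1,0,0,0]) * !![(a*e+b*f-a*c*f),e,f,1; 0,(c*(a*e+b*f-a*c*f)-b*e)/(a*e+b*f-a*c*f),((a*e+b*f-a*c*f)-b*f)/(a*e+b*f-a*c*f),-(b/(a*e+b*f-a*c*f)); 0,0,(1/(a*c-b)),0; 0,0,0,(1/(f*c-e))] := by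
      ext i j
      fin_cases i <;> fin_cases j <;>
        simp [Matrix.mul_apply, Fin.sum_univ_four, Matrix.vecHead, Matrix.vecTail] <;>
        field_simp <;> grind
    calc (!![(1:K),0,0,0; a,1,0,0; b,c,1,0; (a*e+b*f-a*c*f),e,f,1]) = ((!![1, -(-(c/(a*c-b))), -(1/(a*c-b))+(-(c/(a*c-b)))*(-(f/(f*c-e))), (-(c/(a*c-b)))*(1/(f*c-e))+(1/(a*c-b))*(-(b/(a*e+b*f-a*c*f)))-(-(c/(a*c-b)))*(-(f/(f*c-e)))*(-(b/(a*e+b*f-a*c*f))); 0,1,-(-(f/(f*c-e))),-(1/(f*c-e))+(-(f/(f*c-e)))*(-(b/(a*e+b*f-a*c*f))); 0,0,1,-(-(b/(a*e+b*f-a*c*f))); 0,0,0,1]) * (!![1, (-(c/(a*c-b))), (1/(a*c-b)), 0; 0,1,(-(f/(f*c-e))),(1/(f*c-e)); 0,0,1,(-(b/(a*e+b*f-a*c*f))); 0,0,0,1])) * !![(1:K),0,0,0; a,1,0,0; b,c,1,0; (a*e+b*f-a*c*f),e,f,1] := by rw [hU, Matrix.one_mul]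
      _ = _ := by rw [Matrix.mul_assoc, hUM, ← Matrix.mul_assoc]

theorem vanish1 {K : Type} [Field K] (m : Matrix (Fin 4) (Fin 4) K)
    (hm : m ∈ bruhatCell (K := K) (c[0, 2, 1, 3] : Equiv.Perm (Fin 4))) : m 3 0 = 0 := by
  obtain ⟨b₁, hb₁, b₂, hb₂, rfl⟩ := hm
  rw [permMat1]
  have z1 : b₁ 3 0 = 0 := hb₁.2 3 0 (by decide)
  have z2 : b₁ 3 1 = 0 := hb₁.2 3 1 (by decide)
  have z3 : b₁ 3 2 = 0 := hb₁.2 3 2 (by decide)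
  have z4 : b₂ 1 0 = 0 := hb₂.2 1 0 (by decide)
  simp [Matrix.mul_apply, Fin.sum_univ_four, Matrix.vecHead, Matrix.vecTail, z1, z2, z3, z4]

theorem vanish2 {K : Type} [Field K] (m : Matrix (Fin 4) (Fin 4) K)
    (hm : m ∈ bruhatCell (K := K) (c[0, 3, 1, 2] : Equiv.Perm (Fin 4))) :
    m 1 0 * (m 2 1 * m 3 2 - m 2 2 * m 3 1) - m 1 1 * (m 2 0 * m 3 2 - m 2 2 * m 3 0)
      + m 1 2 * (m 2 0 * m 3 1 - m 2 1 * m 3 0) = 0 := by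
  obtain ⟨b₁, hb₁, b₂, hb₂, rfl⟩ := hm
  rw [permMat2]
  have z1 : b₁ 1 0 = 0 := hb₁.2 1 0 (by decide)
  have z2 : b₁ 2 0 = 0 := hb₁.2 2 0 (by decide)
  have z3 : b₁ 3 0 = 0 := hb₁.2 3 0 (by decide)
  have z4 : b₂ 3 0 = 0 := hb₂.2 3 0 (by decide)
  have z5 : b₂ 3 1 = 0 := hb₂.2 3 1 (by decide)
  have z6 : b₂ 3 2 = 0 := hb₂.2 3 2 (by decide)
  simp only [Matrix.mul_apply, Fin.sum_univ_four, Matrix.vecHead, Matrix.vecTail]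
  simp [Matrix.vecHead, Matrix.vecTail, z1, z2, z3, z4, z5, z6]
  ring

theorem omega1_sub {K : Type} [Field K] {s : Matrix (Fin 4) (Fin 4) K}
    (hs : s ∈ schubertAffine (K := K) (c[0, 2, 1, 3] : Equiv.Perm (Fin 4))) : s 3 0 = 0 := by
  obtain ⟨hlow, hcl⟩ := hs
  have h := hcl (MvPolynomial.X (3, 0)) ?_
  · simpa [evalMat, Matrix.add_apply, Matrix.one_apply] using h
  · intro m hm
    simpa [evalMat] using vanish1 m hm

theorem omega2_sub {K : Type} [Field K] {s : Matrix (Fin 4) (Fin 4) K}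
    (hs : s ∈ schubertAffine (K := K) (c[0, 3, 1, 2] : Equiv.Perm (Fin 4))) :
    s 1 0 * s 2 1 * s 3 2 - s 1 0 * s 3 1 - s 2 0 * s 3 2 + s 3 0 = 0 := by
  obtain ⟨hlow, hcl⟩ := hs
  have h := hcl (MvPolynomial.X (1,0) * (MvPolynomial.X (2,1) * MvPolynomial.X (3,2)
      - MvPolynomial.X (2,2) * MvPolynomial.X (3,1))
      - MvPolynomial.X (1,1) * (MvPolynomial.X (2,0) * MvPolynomial.X (3,2)
      - MvPolynomial.X (2,2) * MvPolynomial.X (3,0))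
      + MvPolynomial.X (1,2) * (MvPolynomial.X (2,0) * MvPolynomial.X (3,1)
      - MvPolynomial.X (2,1) * MvPolynomial.X (3,0))) ?_
  · have e11 : s 1 1 = 0 := hlow 1 1 (le_refl _)
    have e12 : s 1 2 = 0 := hlow 1 2 (by decide)
    have e22 : s 2 2 = 0 := hlow 2 2 (le_refl _)
    simp [evalMat, Matrix.add_apply, Matrix.one_apply, e11, e12, e22] at h
    linear_combination h
  · intro m hm
    simpa [evalMat] using vanish2 m hm

open Polynomial in
theorem eval_aeval' {K : Type} [Field K] {σ : Type} (u : σ → Polynomial K) (t : K)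
    (φ : MvPolynomial σ K) :
    (MvPolynomial.aeval u φ).eval t = MvPolynomial.eval (fun i => (u i).eval t) φ := by
  induction φ using MvPolynomial.induction_on with
  | C a => simp [MvPolynomial.algebraMap_eq]
  | add p q hp hq => simp [hp, hq]
  | mul_X p i hp => simp [hp]

set_option maxHeartbeats 1600000 in
theorem omega1_sup {K : Type} [Field K] [CharZero K] {y : Matrix (Fin 4) (Fin 4) K}
    (hlow : y ∈ lowerNil K 4) (h30 : y 3 0 = 0) :
    y ∈ schubertAffine (K := K) (c[0, 2, 1, 3] : Equiv.Perm (Fin 4)) := by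
  refine ⟨hlow, ?_⟩
  intro g hg
  obtain ⟨a, b, c, e, f, rfl⟩ : ∃ a b c e f,
      y = !![0,0,0,0; a,0,0,0; b,c,0,0; 0,e,f,0] := by
    refine ⟨y 1 0, y 2 0, y 2 1, y 3 1, y 3 2, ?_⟩
    ext i j
    fin_cases i <;> fin_cases j <;>
      simp [Matrix.vecHead, Matrix.vecTail] <;>
      first
        | exact hlow _ _ (by decide)
        | exact h30
  clear hlow h30
  have hone : (1 : Matrix (Fin 4) (Fin 4) K) + !![0,0,0,0; a,0,0,0; b,c,0,0; 0,e,f,0] =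
      !![1,0,0,0; a,1,0,0; b,c,1,0; 0,e,f,1] := by
    ext i j
    fin_cases i <;> fin_cases j <;>
      simp [Matrix.one_apply, Matrix.vecHead, Matrix.vecTail]
  rw [hone]
  set E : Fin 4 × Fin 4 → Polynomial K := fun p =>
    !![1,0,0,0; Polynomial.C a + Polynomial.X,1,0,0; Polynomial.C b + Polynomial.X, Polynomial.C c + Polynomial.X,1,0; 0, Polynomial.C e + Polynomial.X, Polynomial.C f + Polynomial.X,1] p.1 p.2 with hE
  have hkey : ∀ t : K, b + t ≠ 0 → e + t ≠ 0 →
      (a+t)*(c+t)*(f+t) - (a+t)*(e+t) - (b+t)*(f+t) ≠ 0 →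
      (MvPolynomial.aeval E g).eval t = 0 := by
    intro t hb he hD
    rw [eval_aeval']
    have hfun : (fun p : Fin 4 × Fin 4 => (E p).eval t) =
        (fun p => (!![1,0,0,0; a+t,1,0,0; b+t,c+t,1,0; 0,e+t,f+t,1] :
          Matrix (Fin 4) (Fin 4) K) p.1 p.2) := by
      funext p
      obtain ⟨i, j⟩ := p
      fin_cases i <;> fin_cases j <;> simp [hE, Matrix.vecHead, Matrix.vecTail]
    rw [hfun]
    exact hg _ (cellMem1 (a+t) (b+t) (c+t) (e+t) (f+t) hb he hD)
  have hPzero : MvPolynomial.aeval E g = 0 := by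
    apply Polynomial.eq_zero_of_infinite_isRoot
    have hQ : ((Polynomial.C a + Polynomial.X)*(Polynomial.C c + Polynomial.X)*(Polynomial.C f + Polynomial.X) - (Polynomial.C a + Polynomial.X)*(Polynomial.C e + Polynomial.X)
        - (Polynomial.C b + Polynomial.X)*(Polynomial.C f + Polynomial.X) : Polynomial K) ≠ 0 := by
      intro h
      have h3 : ((Polynomial.C a + Polynomial.X)*(Polynomial.C c + Polynomial.X)*(Polynomial.C f + Polynomial.X) - (Polynomial.C a + Polynomial.X)*(Polynomial.C e + Polynomial.X)
          - (Polynomial.C b + Polynomial.X)*(Polynomial.C f + Polynomial.X) : Polynomial K).coeff 3 = 1 := by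
        simp [Polynomial.coeff_sub, mul_add, add_mul, Polynomial.coeff_add, Polynomial.coeff_X_pow, Polynomial.coeff_C, Polynomial.coeff_C_mul, Polynomial.coeff_X]
      rw [h] at h3; simp at h3
    have hbad : ({t : K | b + t = 0} ∪ {t : K | e + t = 0} ∪
        {t : K | ((Polynomial.C a + Polynomial.X)*(Polynomial.C c + Polynomial.X)*(Polynomial.C f + Polynomial.X) - (Polynomial.C a + Polynomial.X)*(Polynomial.C e + Polynomial.X)
          - (Polynomial.C b + Polynomial.X)*(Polynomial.C f + Polynomial.X) : Polynomial K).IsRoot t}).Finite := by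
      refine (Set.Finite.union (Set.Finite.union ?_ ?_) ?_)
      · exact Set.Finite.subset (Set.finite_singleton (-b))
          (fun t ht => by simpa using eq_neg_of_add_eq_zero_right ht)
      · exact Set.Finite.subset (Set.finite_singleton (-e))
          (fun t ht => by simpa using eq_neg_of_add_eq_zero_right ht)
      · exact Polynomial.finite_setOf_isRoot hQ
    refine Set.Infinite.mono ?_ hbad.infinite_compl
    intro t ht
    simp only [Set.mem_compl_iff, Set.mem_union, Set.mem_setOf_eq, not_or] at ht
    obtain ⟨⟨h1, h2⟩, h3⟩ := ht
    have h3' : (a+t)*(c+t)*(f+t) - (a+t)*(e+t) - (b+t)*(f+t) ≠ 0 := by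
      intro hc
      apply h3
      simp only [Polynomial.IsRoot, Polynomial.eval_sub, Polynomial.eval_mul, Polynomial.eval_add, Polynomial.eval_C, Polynomial.eval_X]
      linear_combination hc
    exact hkey t h1 h2 h3'
  have h0 := eval_aeval' E 0 g
  rw [hPzero] at h0
  have hfun0 : (fun p : Fin 4 × Fin 4 => (E p).eval 0) =
      (fun p => (!![1,0,0,0; a,1,0,0; b,c,1,0; 0,e,f,1] :
        Matrix (Fin 4) (Fin 4) K) p.1 p.2) := by
    funext p
    obtain ⟨i, j⟩ := p
    fin_cases i <;> fin_cases j <;> simp [hE, Matrix.vecHead, Matrix.vecTail]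
  rw [hfun0] at h0
  simpa [evalMat] using h0.symm

set_option maxHeartbeats 1600000 in
theorem omega2_sup {K : Type} [Field K] [CharZero K] {y : Matrix (Fin 4) (Fin 4) K}
    (hlow : y ∈ lowerNil K 4)
    (hF : y 1 0 * y 2 1 * y 3 2 - y 1 0 * y 3 1 - y 2 0 * y 3 2 + y 3 0 = 0) :
    y ∈ schubertAffine (K := K) (c[0, 3, 1, 2] : Equiv.Perm (Fin 4)) := by
  refine ⟨hlow, ?_⟩
  intro g hg
  obtain ⟨a, b, c, e, f, rfl⟩ : ∃ a b c e f,
      y = !![0,0,0,0; a,0,0,0; b,c,0,0; a*e+b*f-a*c*f,e,f,0] := by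
    refine ⟨y 1 0, y 2 0, y 2 1, y 3 1, y 3 2, ?_⟩
    ext i j
    fin_cases i <;> fin_cases j <;>
      simp [Matrix.vecHead, Matrix.vecTail] <;>
      first
        | exact hlow _ _ (by decide)
        | linear_combination hF
        | linear_combination -hF
  clear hlow hF
  have hone : (1 : Matrix (Fin 4) (Fin 4) K) + !![0,0,0,0; a,0,0,0; b,c,0,0; a*e+b*f-a*c*f,e,f,0] =
      !![1,0,0,0; a,1,0,0; b,c,1,0; a*e+b*f-a*c*f,e,f,1] := by
    ext i j
    fin_cases i <;> fin_cases j <;>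
      simp [Matrix.one_apply, Matrix.vecHead, Matrix.vecTail]
  rw [hone]
  set E : Fin 4 × Fin 4 → Polynomial K := fun p =>
    !![1,0,0,0; (Polynomial.C a + Polynomial.X),1,0,0; (Polynomial.C b + Polynomial.X), (Polynomial.C c + Polynomial.X),1,0; ((Polynomial.C a + Polynomial.X)*(Polynomial.C e + Polynomial.X) + (Polynomial.C b + Polynomial.X)*(Polynomial.C f + Polynomial.X) - (Polynomial.C a + Polynomial.X)*(Polynomial.C c + Polynomial.X)*(Polynomial.C f + Polynomial.X)), (Polynomial.C e + Polynomial.X), (Polynomial.C f + Polynomial.X),1] p.1 p.2 with hE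
  have hkey : ∀ t : K, (a+t)*(e+t)+(b+t)*(f+t)-(a+t)*(c+t)*(f+t) ≠ 0 →
      (c+t)*((a+t)*(e+t)+(b+t)*(f+t)-(a+t)*(c+t)*(f+t)) - (b+t)*(e+t) ≠ 0 →
      (f+t)*(c+t) - (e+t) ≠ 0 → (a+t)*(c+t) - (b+t) ≠ 0 →
      (MvPolynomial.aeval E g).eval t = 0 := by
    intro t k1 k2 k3 k4
    rw [eval_aeval']
    have hfun : (fun p : Fin 4 × Fin 4 => (E p).eval t) =
        (fun p => (!![1,0,0,0; a+t,1,0,0; b+t,c+t,1,0;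
          (a+t)*(e+t)+(b+t)*(f+t)-(a+t)*(c+t)*(f+t),e+t,f+t,1] :
          Matrix (Fin 4) (Fin 4) K) p.1 p.2) := by
      funext p
      obtain ⟨i, j⟩ := p
      fin_cases i <;> fin_cases j <;> simp [hE, Matrix.vecHead, Matrix.vecTail]
    rw [hfun]
    exact hg _ (cellMem2 (a+t) (b+t) (c+t) (e+t) (f+t) k1 k2 k3 k4)
  have hPzero : MvPolynomial.aeval E g = 0 := by
    apply Polynomial.eq_zero_of_infinite_isRoot
    have hbad : ({t : K | (((Polynomial.C a + Polynomial.X)*(Polynomial.C e + Polynomial.X) + (Polynomial.C b + Polynomial.X)*(Polynomial.C f + Polynomial.X) - (Polynomial.C a + Polynomial.X)*(Polynomial.C c + Polynomial.X)*(Polynomial.C f + Polynomial.X)) : Polynomial K).IsRoot t} ∪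
        {t : K | (((Polynomial.C c + Polynomial.X)*((Polynomial.C a + Polynomial.X)*(Polynomial.C e + Polynomial.X) + (Polynomial.C b + Polynomial.X)*(Polynomial.C f + Polynomial.X) - (Polynomial.C a + Polynomial.X)*(Polynomial.C c + Polynomial.X)*(Polynomial.C f + Polynomial.X)) - (Polynomial.C b + Polynomial.X)*(Polynomial.C e + Polynomial.X)) : Polynomial K).IsRoot t} ∪
        {t : K | (((Polynomial.C f + Polynomial.X)*(Polynomial.C c + Polynomial.X) - (Polynomial.C e + Polynomial.X)) : Polynomial K).IsRoot t} ∪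
        {t : K | (((Polynomial.C a + Polynomial.X)*(Polynomial.C c + Polynomial.X) - (Polynomial.C b + Polynomial.X)) : Polynomial K).IsRoot t}).Finite := by
      refine Set.Finite.union (Set.Finite.union (Set.Finite.union ?_ ?_) ?_) ?_
      · have hnz : (((Polynomial.C a + Polynomial.X)*(Polynomial.C e + Polynomial.X) + (Polynomial.C b + Polynomial.X)*(Polynomial.C f + Polynomial.X) - (Polynomial.C a + Polynomial.X)*(Polynomial.C c + Polynomial.X)*(Polynomial.C f + Polynomial.X)) : Polynomial K) ≠ 0 := by
          intro hzz
          have h3 : (((Polynomial.C a + Polynomial.X)*(Polynomial.C e + Polynomial.X) + (Polynomial.C b + Polynomial.X)*(Polynomial.C f + Polynomial.X) - (Polynomial.C a + Polynomial.X)*(Polynomial.C c + Polynomial.X)*(Polynomial.C f + Polynomial.X)) : Polynomial K).coeff 3 = (-1 : K) := by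
            simp [Polynomial.coeff_sub, mul_add, add_mul, mul_sub, sub_mul, Polynomial.coeff_add, Polynomial.coeff_X_pow, Polynomial.coeff_C, Polynomial.coeff_C_mul, Polynomial.coeff_X]
          rw [hzz] at h3; simp at h3
        exact Polynomial.finite_setOf_isRoot hnz
      · have hnz : (((Polynomial.C c + Polynomial.X)*((Polynomial.C a + Polynomial.X)*(Polynomial.C e + Polynomial.X) + (Polynomial.C b + Polynomial.X)*(Polynomial.C f + Polynomial.X) - (Polynomial.C a + Polynomial.X)*(Polynomial.C c + Polynomial.X)*(Polynomial.C f + Polynomial.X)) - (Polynomial.C b + Polynomial.X)*(Polynomial.C e + Polynomial.X)) : Polynomial K) ≠ 0 := by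
          intro hzz
          have h3 : (((Polynomial.C c + Polynomial.X)*((Polynomial.C a + Polynomial.X)*(Polynomial.C e + Polynomial.X) + (Polynomial.C b + Polynomial.X)*(Polynomial.C f + Polynomial.X) - (Polynomial.C a + Polynomial.X)*(Polynomial.C c + Polynomial.X)*(Polynomial.C f + Polynomial.X)) - (Polynomial.C b + Polynomial.X)*(Polynomial.C e + Polynomial.X)) : Polynomial K).coeff 4 = (-1 : K) := by
            simp [Polynomial.coeff_sub, mul_add, add_mul, mul_sub, sub_mul, Polynomial.coeff_add, Polynomial.coeff_X_pow, Polynomial.coeff_C, Polynomial.coeff_C_mul, Polynomial.coeff_X]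
          rw [hzz] at h3; simp at h3
        exact Polynomial.finite_setOf_isRoot hnz
      · have hnz : (((Polynomial.C f + Polynomial.X)*(Polynomial.C c + Polynomial.X) - (Polynomial.C e + Polynomial.X)) : Polynomial K) ≠ 0 := by
          intro hzz
          have h3 : (((Polynomial.C f + Polynomial.X)*(Polynomial.C c + Polynomial.X) - (Polynomial.C e + Polynomial.X)) : Polynomial K).coeff 2 = (1 : K) := by
            simp [Polynomial.coeff_sub, mul_add, add_mul, mul_sub, sub_mul, Polynomial.coeff_add, Polynomial.coeff_X_pow, Polynomial.coeff_C, Polynomial.coeff_C_mul, Polynomial.coeff_X]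
          rw [hzz] at h3; simp at h3
        exact Polynomial.finite_setOf_isRoot hnz
      · have hnz : (((Polynomial.C a + Polynomial.X)*(Polynomial.C c + Polynomial.X) - (Polynomial.C b + Polynomial.X)) : Polynomial K) ≠ 0 := by
          intro hzz
          have h3 : (((Polynomial.C a + Polynomial.X)*(Polynomial.C c + Polynomial.X) - (Polynomial.C b + Polynomial.X)) : Polynomial K).coeff 2 = (1 : K) := by
            simp [Polynomial.coeff_sub, mul_add, add_mul, mul_sub, sub_mul, Polynomial.coeff_add, Polynomial.coeff_X_pow, Polynomial.coeff_C, Polynomial.coeff_C_mul, Polynomial.coeff_X]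
          rw [hzz] at h3; simp at h3
        exact Polynomial.finite_setOf_isRoot hnz
    refine Set.Infinite.mono ?_ hbad.infinite_compl
    intro t ht
    simp only [Set.mem_compl_iff, Set.mem_union, Set.mem_setOf_eq, not_or] at ht
    obtain ⟨⟨⟨h1, h2⟩, h3⟩, h4⟩ := ht
    refine hkey t ?_ ?_ ?_ ?_
    · intro hc; apply h1; simp only [Polynomial.IsRoot, Polynomial.eval_sub, Polynomial.eval_mul, Polynomial.eval_add, Polynomial.eval_C, Polynomial.eval_X]; linear_combination hc
    · intro hc; apply h2; simp only [Polynomial.IsRoot, Polynomial.eval_sub, Polynomial.eval_mul, Polynomial.eval_add, Polynomial.eval_C, Polynomial.eval_X]; linear_combination hc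
    · intro hc; apply h3; simp only [Polynomial.IsRoot, Polynomial.eval_sub, Polynomial.eval_mul, Polynomial.eval_add, Polynomial.eval_C, Polynomial.eval_X]; linear_combination hc
    · intro hc; apply h4; simp only [Polynomial.IsRoot, Polynomial.eval_sub, Polynomial.eval_mul, Polynomial.eval_add, Polynomial.eval_C, Polynomial.eval_X]; linear_combination hc
  have h0 := eval_aeval' E 0 g
  rw [hPzero] at h0
  have hfun0 : (fun p : Fin 4 × Fin 4 => (E p).eval 0) =
      (fun p => (!![1,0,0,0; a,1,0,0; b,c,1,0; a*e+b*f-a*c*f,e,f,1] :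
        Matrix (Fin 4) (Fin 4) K) p.1 p.2) := by
    funext p
    obtain ⟨i, j⟩ := p
    fin_cases i <;> fin_cases j <;> simp [hE, Matrix.vecHead, Matrix.vecTail]
  rw [hfun0] at h0
  simpa [evalMat] using h0.symm

theorem aeval_mul_hom {K A : Type} [CommSemiring K] [CommSemiring A] [Algebra K A] {σ : Type}
    {φ : MvPolynomial σ K} {n : ℕ} (h : φ.IsHomogeneous n) (a : A) (u : σ → A) :
    MvPolynomial.aeval (fun i => a * u i) φ = a ^ n * MvPolynomial.aeval u φ := by
  classical
  rw [MvPolynomial.aeval_def, MvPolynomial.aeval_def, MvPolynomial.eval₂_eq,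
    MvPolynomial.eval₂_eq, Finset.mul_sum]
  apply Finset.sum_congr rfl
  intro d hd
  have hdeg : d.degree = n := by
    have := h (MvPolynomial.mem_support_iff.mp hd)
    rwa [Finsupp.degree_eq_weight_one]
  rw [Finset.prod_congr rfl (fun i _ => mul_pow a (u i) (d i))]
  rw [Finset.prod_mul_distrib, Finset.prod_pow_eq_pow_sum]
  have : ∑ i ∈ d.support, d i = n := by rw [← hdeg]; rfl
  rw [this]; ring

set_option maxHeartbeats 1600000 in
theorem key_coeff {K : Type} [Field K] [CharZero K] (w : Equiv.Perm (Fin 4))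
    (u : Fin 4 × Fin 4 → Polynomial K) (x : Matrix (Fin 4) (Fin 4) K)
    (hu0 : ∀ p : Fin 4 × Fin 4, (u p).eval 0 = x p.1 p.2)
    (hmem : ∀ t : K,
      (Matrix.of fun i j => (Polynomial.X * u (i, j)).eval t) ∈ schubertAffine (K := K) w)
    (f : MvPolynomial (Fin 4 × Fin 4) K)
    (hf : ∀ s ∈ schubertAffine (K := K) w, evalMat s f = 0)
    (d : ℕ) (hlowf : ∀ e < d, MvPolynomial.homogeneousComponent e f = 0) :
    evalMat x (MvPolynomial.homogeneousComponent d f) = 0 := by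
  classical
  set s : Fin 4 × Fin 4 → Polynomial K := fun p => Polynomial.X * u p with hs
  have hG : MvPolynomial.aeval s f = 0 := by
    apply Polynomial.funext
    intro t
    rw [Polynomial.eval_zero, eval_aeval']
    exact hf _ (hmem t)
  by_cases hdN : d ≤ f.totalDegree
  · have h0 : ((MvPolynomial.aeval s f).coeff d) = 0 := by rw [hG]; simp
    rw [← MvPolynomial.sum_homogeneousComponent f, map_sum, Polynomial.finset_sum_coeff] at h0
    rw [Finset.sum_eq_single d ?_ ?_] at h0
    · -- h0 : coeff d (aeval s (comp d f)) = 0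
      have hhom := MvPolynomial.homogeneousComponent_isHomogeneous d f
      rw [aeval_mul_hom hhom Polynomial.X u, mul_comm, Polynomial.coeff_mul_X_pow'] at h0
      simp only [le_refl, if_true, Nat.sub_self] at h0
      rw [Polynomial.coeff_zero_eq_eval_zero, eval_aeval'] at h0
      have : (fun i : Fin 4 × Fin 4 => (u i).eval 0) = fun p => x p.1 p.2 := funext hu0
      rw [this] at h0
      exact h0
    · intro e _ hne
      rcases lt_or_gt_of_ne hne with hlt | hgt
      · rw [hlowf e hlt]; simp
      · rw [aeval_mul_hom (MvPolynomial.homogeneousComponent_isHomogeneous e f) Polynomial.X u,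
          mul_comm, Polynomial.coeff_mul_X_pow']
        rw [if_neg (by omega)]
    · intro hd
      exact absurd (Finset.mem_range.mpr (by omega)) hd
  · have hz : MvPolynomial.homogeneousComponent d f = 0 :=
      MvPolynomial.homogeneousComponent_eq_zero d f (by omega)
    rw [hz]
    simp [evalMat]

theorem comp_X0 {K : Type} [Field K] (p : Fin 4 × Fin 4) :
    MvPolynomial.homogeneousComponent 0 (MvPolynomial.X p : MvPolynomial (Fin 4 × Fin 4) K) = 0 := by
  rw [MvPolynomial.homogeneousComponent_of_mem
    ((MvPolynomial.mem_homogeneousSubmodule _ _).mpr (MvPolynomial.isHomogeneous_X _ _))]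
  simp

theorem comp_X1 {K : Type} [Field K] (p : Fin 4 × Fin 4) :
    MvPolynomial.homogeneousComponent 1 (MvPolynomial.X p : MvPolynomial (Fin 4 × Fin 4) K)
      = MvPolynomial.X p := by
  rw [MvPolynomial.homogeneousComponent_of_mem
    ((MvPolynomial.mem_homogeneousSubmodule _ _).mpr (MvPolynomial.isHomogeneous_X _ _))]
  simp

noncomputable def F2 (K : Type) [Field K] : MvPolynomial (Fin 4 × Fin 4) K :=
  MvPolynomial.X (1,0) * MvPolynomial.X (2,1) * MvPolynomial.X (3,2)
    - MvPolynomial.X (1,0) * MvPolynomial.X (3,1)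
    - MvPolynomial.X (2,0) * MvPolynomial.X (3,2) + MvPolynomial.X (3,0)

theorem comp_F2 {K : Type} [Field K] (n : ℕ) :
    MvPolynomial.homogeneousComponent n (F2 K) =
      (if n = 3 then MvPolynomial.X (1,0) * MvPolynomial.X (2,1) * MvPolynomial.X (3,2) else 0)
      - (if n = 2 then MvPolynomial.X (1,0) * MvPolynomial.X (3,1) else 0)
      - (if n = 2 then MvPolynomial.X (2,0) * MvPolynomial.X (3,2) else 0)
      + (if n = 1 then MvPolynomial.X (3,0) else 0) := by
  have h3 : (MvPolynomial.X (1,0) * MvPolynomial.X (2,1) * MvPolynomial.X (3,2) :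
      MvPolynomial (Fin 4 × Fin 4) K).IsHomogeneous 3 :=
    ((MvPolynomial.isHomogeneous_X _ _).mul (MvPolynomial.isHomogeneous_X _ _)).mul
      (MvPolynomial.isHomogeneous_X _ _)
  have h2a : (MvPolynomial.X (1,0) * MvPolynomial.X (3,1) :
      MvPolynomial (Fin 4 × Fin 4) K).IsHomogeneous 2 :=
    (MvPolynomial.isHomogeneous_X _ _).mul (MvPolynomial.isHomogeneous_X _ _)
  have h2b : (MvPolynomial.X (2,0) * MvPolynomial.X (3,2) :
      MvPolynomial (Fin 4 × Fin 4) K).IsHomogeneous 2 :=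
    (MvPolynomial.isHomogeneous_X _ _).mul (MvPolynomial.isHomogeneous_X _ _)
  rw [F2, map_add, map_sub, map_sub,
    MvPolynomial.homogeneousComponent_of_mem ((MvPolynomial.mem_homogeneousSubmodule _ _).mpr h3),
    MvPolynomial.homogeneousComponent_of_mem ((MvPolynomial.mem_homogeneousSubmodule _ _).mpr h2a),
    MvPolynomial.homogeneousComponent_of_mem ((MvPolynomial.mem_homogeneousSubmodule _ _).mpr h2b),
    MvPolynomial.homogeneousComponent_of_mem ((MvPolynomial.mem_homogeneousSubmodule _ _).mpr
      (MvPolynomial.isHomogeneous_X _ _))]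

set_option maxHeartbeats 1600000 in
theorem tangentCone_A3_final {K : Type} [Field K] [IsAlgClosed K] [CharZero K]
    (w : Equiv.Perm (Fin 4)) (hw : w = c[0, 2, 1, 3] ∨ w = c[0, 3, 1, 2]) :
    tangentCone (K := K) w = {x ∈ lowerNil K 4 | x 3 0 = 0} := by
  rcases hw with rfl | rfl
  · ext x
    constructor
    · rintro ⟨hlow, hp⟩
      refine ⟨hlow, ?_⟩
      have hf : ∀ s ∈ schubertAffine (K := K) (c[0,2,1,3] : Equiv.Perm (Fin 4)),
          evalMat s (MvPolynomial.X ((3 : Fin 4), (0 : Fin 4)) :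
            MvPolynomial (Fin 4 × Fin 4) K) = 0 := by
        intro s hs; simpa [evalMat] using omega1_sub hs
      have h1 := hp _ hf 1 ?_ ?_
      · rw [comp_X1] at h1
        simpa [evalMat] using h1
      · intro e he; interval_cases e; exact comp_X0 _
      · rw [comp_X1]; exact MvPolynomial.X_ne_zero _
    · rintro ⟨hlow, h30⟩
      refine ⟨hlow, ?_⟩
      intro f hf d hlowf _
      refine key_coeff _ (fun p => Polynomial.C (x p.1 p.2)) x (by simp) ?_ f hf d hlowf
      intro t
      apply omega1_sup
      · intro i j hij
        simp [Matrix.of_apply, hlow i j hij]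
      · simp [Matrix.of_apply, h30]
  · ext x
    constructor
    · rintro ⟨hlow, hp⟩
      refine ⟨hlow, ?_⟩
      have hf : ∀ s ∈ schubertAffine (K := K) (c[0,3,1,2] : Equiv.Perm (Fin 4)),
          evalMat s (F2 K) = 0 := by
        intro s hs
        have := omega2_sub hs
        simp only [F2, evalMat, _root_.map_add, _root_.map_sub, _root_.map_mul, MvPolynomial.eval_X]
        linear_combination this
      have h1 := hp _ hf 1 ?_ ?_
      · rw [comp_F2] at h1
        norm_num at h1
        simpa [evalMat] using h1
      · intro e he
        interval_cases e
        rw [comp_F2]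
        norm_num
      · rw [comp_F2]
        norm_num
    · rintro ⟨hlow, h30⟩
      refine ⟨hlow, ?_⟩
      intro f hf d hlowf _
      refine key_coeff _ (fun p => if p = ((3 : Fin 4), (0 : Fin 4)) then
          (Polynomial.C (x 1 0) * Polynomial.C (x 3 1)
            + Polynomial.C (x 2 0) * Polynomial.C (x 3 2)) * Polynomial.X
          - (Polynomial.C (x 1 0) * Polynomial.C (x 2 1) * Polynomial.C (x 3 2)) * Polynomial.X^2
        else Polynomial.C (x p.1 p.2)) x ?_ ?_ f hf d hlowf
      · intro p
        by_cases hp : p = ((3 : Fin 4), (0 : Fin 4))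
        · subst hp; simp [h30]
        · simp [hp]
      · intro t
        apply omega2_sup
        · intro i j hij
          have hne : ¬(i = 3 ∧ j = 0) := by
            rintro ⟨h1, h2⟩
            rw [h1, h2] at hij
            exact absurd hij (by decide)
          simp [Matrix.of_apply, hne, hlow i j hij]
        · have e1 : ((1, 0) : Fin 4 × Fin 4) ≠ (3, 0) := by decide
          have e2 : ((2, 1) : Fin 4 × Fin 4) ≠ (3, 0) := by decide
          have e3 : ((3, 2) : Fin 4 × Fin 4) ≠ (3, 0) := by decide
          have e4 : ((3, 1) : Fin 4 × Fin 4) ≠ (3, 0) := by decide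
          have e5 : ((2, 0) : Fin 4 × Fin 4) ≠ (3, 0) := by decide
          simp [Matrix.of_apply, e1, e2, e3, e4, e5]
          ring

/-- For `n = 4` and both 4-cycles `w = (1324)` and `w = (1423)` of `S₄`, the tangent
cone `C_w` equals `{x ∈ n₋ : x₄₁ = 0}` (indices here are 0-based). -/
theorem tangentCone_A3_1324_1423 {K : Type} [Field K] [IsAlgClosed K] [CharZero K]
    (w : Equiv.Perm (Fin 4)) (hw : w = c[0, 2, 1, 3] ∨ w = c[0, 3, 1, 2]) :
    tangentCone (K := K) w = {x ∈ lowerNil K 4 | x 3 0 = 0} :=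
  tangentCone_A3_final w hw
end

section
/- Let n = 4 and let w = (13)(24) ∈ S_4. The vanishing ideal of the affine part Ω_w of the Schubert variety of w, inside the polynomial ring K[x_{21}, x_{31}, x_{32}, x_{41}, x_{42}, x_{43}], is generated by the two polynomials x_{41} and x_{43} x_{31} + x_{42} x_{21} − x_{43} x_{32} x_{21}. -/
open Matrix MvPolynomial

set_option maxHeartbeats 1600000

section Aux

abbrev w4 : Equiv.Perm (Fin 4) := Equiv.swap (0 : Fin 4) 2 * Equiv.swap (1 : Fin 4) 3

lemma permMat_w4 {K : Type} [Field K] :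
    permMat K w4 = !![0,0,1,0; 0,0,0,1; 1,0,0,0; 0,1,0,0] := by
  ext i j
  fin_cases i <;> fin_cases j <;>
    simp (config := { decide := true }) [permMat, Matrix.cons_val_one, Matrix.cons_val_two,
      Matrix.cons_val_three, Matrix.head_cons, Matrix.tail_cons, Matrix.cons_val_zero,
      Matrix.vecHead, Matrix.vecTail]

noncomputable def P2big (K : Type) [Field K] : MvPolynomial (Fin 4 × Fin 4) K :=
  X ((1 : Fin 4), (0 : Fin 4)) * (X ((2 : Fin 4), (1 : Fin 4)) * X ((3 : Fin 4), (2 : Fin 4))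
      - X ((3 : Fin 4), (1 : Fin 4)) * X ((2 : Fin 4), (2 : Fin 4)))
    - X ((1 : Fin 4), (1 : Fin 4)) * (X ((2 : Fin 4), (0 : Fin 4)) * X ((3 : Fin 4), (2 : Fin 4))
      - X ((3 : Fin 4), (0 : Fin 4)) * X ((2 : Fin 4), (2 : Fin 4)))
    + X ((1 : Fin 4), (2 : Fin 4)) * (X ((2 : Fin 4), (0 : Fin 4)) * X ((3 : Fin 4), (1 : Fin 4))
      - X ((3 : Fin 4), (0 : Fin 4)) * X ((2 : Fin 4), (1 : Fin 4)))

lemma cell_P1 {K : Type} [Field K] :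
    ∀ s ∈ bruhatCell (K := K) (n := 4) w4, evalMat s (X ((3 : Fin 4), (0 : Fin 4))) = 0 := by
  rintro s ⟨b₁, ⟨-, hz₁⟩, b₂, ⟨-, hz₂⟩, rfl⟩
  have A10 := hz₁ 1 0 (by decide); have A20 := hz₁ 2 0 (by decide)
  have A21 := hz₁ 2 1 (by decide); have A30 := hz₁ 3 0 (by decide)
  have A31 := hz₁ 3 1 (by decide); have A32 := hz₁ 3 2 (by decide)
  have B10 := hz₂ 1 0 (by decide); have B20 := hz₂ 2 0 (by decide)
  have B21 := hz₂ 2 1 (by decide); have B30 := hz₂ 3 0 (by decide)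
  have B31 := hz₂ 3 1 (by decide); have B32 := hz₂ 3 2 (by decide)
  simp only [evalMat, eval_X]
  show (b₁ * permMat K w4 * b₂) 3 0 = 0
  rw [permMat_w4]
  simp [Matrix.mul_apply, Fin.sum_univ_four, Matrix.cons_val_one, Matrix.cons_val_two,
    Matrix.cons_val_three, Matrix.head_cons, Matrix.tail_cons, Matrix.cons_val_zero,
    Matrix.vecHead, Matrix.vecTail, A10, A20, A21, A30, A31, A32, B10, B20, B21, B30, B31, B32]

lemma cell_P2 {K : Type} [Field K] :
    ∀ s ∈ bruhatCell (K := K) (n := 4) w4, evalMat s (P2big K) = 0 := by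
  rintro s ⟨b₁, ⟨-, hz₁⟩, b₂, ⟨-, hz₂⟩, rfl⟩
  have A10 := hz₁ 1 0 (by decide); have A20 := hz₁ 2 0 (by decide)
  have A21 := hz₁ 2 1 (by decide); have A30 := hz₁ 3 0 (by decide)
  have A31 := hz₁ 3 1 (by decide); have A32 := hz₁ 3 2 (by decide)
  have B10 := hz₂ 1 0 (by decide); have B20 := hz₂ 2 0 (by decide)
  have B21 := hz₂ 2 1 (by decide); have B30 := hz₂ 3 0 (by decide)
  have B31 := hz₂ 3 1 (by decide); have B32 := hz₂ 3 2 (by decide)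
  simp only [evalMat, P2big, map_add, map_sub, _root_.map_mul, eval_X]
  rw [permMat_w4]
  simp [Matrix.mul_apply, Fin.sum_univ_four, Matrix.cons_val_one, Matrix.cons_val_two,
    Matrix.cons_val_three, Matrix.head_cons, Matrix.tail_cons, Matrix.cons_val_zero,
    Matrix.vecHead, Matrix.vecTail, Function.comp,
    A10, A20, A21, A30, A31, A32, B10, B20, B21, B30, B31, B32]
  ring

lemma upper_mem {K : Type} [Field K] (m : Matrix (Fin 4) (Fin 4) K)
    (hm : ∀ i j : Fin 4, j < i → m i j = 0)
    (hd : m 0 0 * m 1 1 * m 2 2 * m 3 3 ≠ 0) : m ∈ upperB K 4 := by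
  have hdet : m.det = m 0 0 * (m 1 1 * (m 2 2 * m 3 3)) := by
    rw [Matrix.det_of_upperTriangular (by exact fun i j h => hm i j h), Fin.prod_univ_four]
    ring
  exact ⟨(Matrix.isUnit_iff_isUnit_det _).mpr (isUnit_iff_ne_zero.mpr
    (by rw [hdet]; intro h; exact hd (by rw [← h]; ring))), hm⟩

lemma chart {K : Type} [Field K] (x10 x20 x21 x31 x32 : K) (h20 : x20 ≠ 0) (h31 : x31 ≠ 0)
    (hrel : x32*x20 + x31*x10 - x32*x21*x10 = 0) :
    (!![1,0,0,0; x10,1,0,0; x20,x21,1,0; (0:K),x31,x32,1]) ∈ bruhatCell w4 := by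
  have ha : x21*x32 - x31 ≠ 0 := by
    intro h
    have hz : x32 * x20 = 0 := by linear_combination hrel + x10 * h
    rcases mul_eq_zero.mp hz with h32 | h'
    · exact h31 (by linear_combination (-1 : K) * h + x21 * h32)
    · exact h20 h'
  have hb : x10*x21 - x20 ≠ 0 := by
    intro h
    have hz : x31 * x10 = 0 := by linear_combination hrel + x32 * h
    rcases mul_eq_zero.mp hz with h' | h'
    · exact h31 h'
    · exact h20 (by linear_combination (-1 : K) * h + x21 * h')
  refine ⟨!![(x21*x32-x31)/(x20*x31), x21/(x20*x31), 1, -(x21/(x20*x31));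
            0, (x10*x21-x20)/(x20*x31), x10, (x20-x10*x21)/(x20*x31);
            0,0,x20,0; (0:K),0,0,1], upper_mem _ ?_ ?_,
         !![1, x21/x20, 1/x20, 0; 0, x31, x32, 1; 0,0,1,0; (0:K),0,0,1], upper_mem _ ?_ ?_, ?_⟩
  · intro i j hij
    fin_cases i <;> fin_cases j <;> first | rfl | exact absurd hij (by decide)
  · show (x21*x32-x31)/(x20*x31) * ((x10*x21-x20)/(x20*x31)) * x20 * 1 ≠ 0
    have h2031 : x20 * x31 ≠ 0 := mul_ne_zero h20 h31
    exact mul_ne_zero (mul_ne_zero (mul_ne_zero (div_ne_zero ha h2031)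
      (div_ne_zero hb h2031)) h20) one_ne_zero
  · intro i j hij
    fin_cases i <;> fin_cases j <;> first | rfl | exact absurd hij (by decide)
  · show (1 : K) * x31 * 1 * 1 ≠ 0
    simpa using h31
  · rw [permMat_w4]
    ext i j
    fin_cases i <;> fin_cases j <;>
      simp only [Matrix.mul_apply, Fin.sum_univ_four, Matrix.cons_val_one, Matrix.cons_val_two,
          Matrix.cons_val_three, Matrix.head_cons, Matrix.tail_cons, Matrix.cons_val_zero,
          Matrix.of_apply, Matrix.cons_val', Matrix.empty_val', Matrix.cons_val_fin_one,
          Matrix.head_fin_const, Fin.reduceFinMk, Matrix.cons_val, Fin.isValue] <;>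
      field_simp <;> first | ring1 | (linear_combination (-x20) * hrel)

lemma key {K : Type} [Field K] [CharZero K] (c10 c20 c21 c31 c32 : Polynomial K)
    (hrel : c32*c20 + c31*c10 - c32*c21*c10 = 0)
    (h20 : c20 ≠ 0) (h31 : c31 ≠ 0)
    (f : MvPolynomial (Fin 4 × Fin 4) K)
    (hf : ∀ s ∈ bruhatCell (K := K) (n := 4) w4, evalMat s f = 0) :
    evalMat !![1,0,0,0; c10.eval 0,1,0,0; c20.eval 0, c21.eval 0,1,0;
               0, c31.eval 0, c32.eval 0,1] f = 0 := by
  classical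
  set g : Fin 4 × Fin 4 → Polynomial K := fun p =>
    !![Polynomial.C 1,0,0,0; c10, Polynomial.C 1,0,0; c20, c21, Polynomial.C 1,0;
       0, c31, c32, Polynomial.C 1] p.1 p.2 with hg
  set F : Polynomial K := MvPolynomial.eval₂ Polynomial.C g f with hFdef
  have heval : ∀ t : K, F.eval t =
      evalMat !![1,0,0,0; c10.eval t,1,0,0; c20.eval t, c21.eval t,1,0;
                 0, c31.eval t, c32.eval t,1] f := by
    intro t
    have h1 : F.eval t = (Polynomial.evalRingHom t) F := rfl
    rw [h1, hFdef, MvPolynomial.eval₂_comp_left (Polynomial.evalRingHom t) Polynomial.C g f]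
    have h2 : (Polynomial.evalRingHom t).comp Polynomial.C = RingHom.id K := by
      ext a; simp
    rw [h2]
    have h3 : ((Polynomial.evalRingHom t) ∘ g) = fun p : Fin 4 × Fin 4 =>
        (!![1,0,0,0; c10.eval t,1,0,0; c20.eval t, c21.eval t,1,0;
           0, c31.eval t, c32.eval t,1] : Matrix (Fin 4) (Fin 4) K) p.1 p.2 := by
      funext p
      obtain ⟨i, j⟩ := p
      fin_cases i <;> fin_cases j <;> simp [hg]
    rw [h3]
    rfl
  have hFvan : ∀ t : K, c20.eval t ≠ 0 → c31.eval t ≠ 0 → F.eval t = 0 := by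
    intro t h1 h2
    rw [heval t]
    apply hf
    apply chart _ _ _ _ _ h1 h2
    have := congrArg (Polynomial.eval t) hrel
    simpa using this
  have hF : F = 0 := by
    by_contra hF0
    have hfin1 : {t : K | Polynomial.IsRoot F t}.Finite := Polynomial.finite_setOf_isRoot hF0
    have hfin2 : {t : K | Polynomial.IsRoot (c20 * c31) t}.Finite :=
      Polynomial.finite_setOf_isRoot (mul_ne_zero h20 h31)
    have hsub : (Set.univ : Set K) ⊆ {t : K | Polynomial.IsRoot F t} ∪
        {t : K | Polynomial.IsRoot (c20 * c31) t} := by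
      intro t _
      by_cases h : (c20 * c31).eval t = 0
      · exact Or.inr h
      · rw [Polynomial.eval_mul] at h
        exact Or.inl (hFvan t (fun h' => h (by rw [h', zero_mul]))
          (fun h' => h (by rw [h', mul_zero])))
    exact Set.infinite_univ (α := K) ((hfin1.union hfin2).subset hsub)
  have h0 := heval 0
  rw [hF] at h0
  simpa using h0.symm

lemma mem_schubert {K : Type} [Field K] [CharZero K] (x10 x20 x21 x31 x32 : K)
    (hrel : x32*x20 + x31*x10 - x32*x21*x10 = 0)
    (f : MvPolynomial (Fin 4 × Fin 4) K)
    (hf : ∀ s ∈ bruhatCell (K := K) (n := 4) w4, evalMat s f = 0) :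
    evalMat !![1,0,0,0; x10,1,0,0; x20,x21,1,0; (0:K),x31,x32,1] f = 0 := by
  classical
  by_cases h0 : x10 = 0 ∧ x32 = 0
  · obtain ⟨h10, h32⟩ := h0
    have := key (K := K) 0 (Polynomial.X + Polynomial.C x20) (Polynomial.C x21)
      (Polynomial.X + Polynomial.C x31) 0 (by ring)
      (Polynomial.X_add_C_ne_zero x20) (Polynomial.X_add_C_ne_zero x31) f hf
    simpa [h10, h32] using this
  · have hp : ∃ p : K, x20 = x10 * p ∧ x31 = x32 * (x21 - p) := by
      by_cases h10 : x10 = 0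
      · have h32 : x32 ≠ 0 := fun h32 => h0 ⟨h10, h32⟩
        have h20 : x20 = 0 := by
          have : x32 * x20 = 0 := by linear_combination hrel - x31 * h10 + x21 * x32 * h10
          exact (mul_eq_zero.mp this).resolve_left h32
        refine ⟨x21 - x31 / x32, by rw [h10, zero_mul, h20], by field_simp; ring⟩
      · refine ⟨x20 / x10, by field_simp, ?_⟩
        field_simp
        linear_combination hrel
    obtain ⟨p, hp20, hp31⟩ := hp
    have := key (K := K) (Polynomial.X + Polynomial.C x10)
      ((Polynomial.X + Polynomial.C x10) * (Polynomial.X + Polynomial.C p))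
      (Polynomial.C x21)
      ((Polynomial.X + Polynomial.C x32) * (Polynomial.C x21 - Polynomial.C p - Polynomial.X))
      (Polynomial.X + Polynomial.C x32)
      (by ring)
      (mul_ne_zero (Polynomial.X_add_C_ne_zero x10) (Polynomial.X_add_C_ne_zero p))
      (mul_ne_zero (Polynomial.X_add_C_ne_zero x32) (by
        have h5 : (Polynomial.C x21 - Polynomial.C p - Polynomial.X : Polynomial K) =
            -(Polynomial.X - Polynomial.C (x21 - p)) := by
          rw [Polynomial.C_sub]; ring
        rw [h5, neg_ne_zero]
        exact Polynomial.X_sub_C_ne_zero (x21 - p)))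
      f hf
    simpa [hp20, hp31] using this

def v10 : {p : Fin 4 × Fin 4 // p.2 < p.1} := ⟨(1,0), by decide⟩
def v20 : {p : Fin 4 × Fin 4 // p.2 < p.1} := ⟨(2,0), by decide⟩
def v21 : {p : Fin 4 × Fin 4 // p.2 < p.1} := ⟨(2,1), by decide⟩
def v30 : {p : Fin 4 × Fin 4 // p.2 < p.1} := ⟨(3,0), by decide⟩
def v31 : {p : Fin 4 × Fin 4 // p.2 < p.1} := ⟨(3,1), by decide⟩
def v32 : {p : Fin 4 × Fin 4 // p.2 < p.1} := ⟨(3,2), by decide⟩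

abbrev SIx : Type := {p : Fin 4 × Fin 4 // p.2 < p.1}

def vlist : Fin 5 → SIx := ![v10, v21, v30, v31, v32]

def toO (v : SIx) : Option (Fin 5) :=
  if v = v10 then some 0 else if v = v21 then some 1 else if v = v30 then some 2
  else if v = v31 then some 3 else if v = v32 then some 4 else none

def ofO : Option (Fin 5) → SIx
  | none => v20
  | some k => vlist k

def eS : SIx ≃ Option (Fin 5) where
  toFun := toO
  invFun := ofO
  left_inv := by decide
  right_inv := by decide

end Aux

noncomputable section AuxAlg

variable {K : Type} [Field K]

def σm : MvPolynomial SIx K →ₐ[K] MvPolynomial SIx K :=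
  aeval fun v => if v = v30 then 0 else X v

def τm : MvPolynomial SIx K →ₐ[K] MvPolynomial SIx K :=
  aeval fun v => if v = v20 then 0 else X v

def φm : MvPolynomial SIx K →ₐ[K] MvPolynomial SIx K :=
  aeval fun v => if v = v20 then X v20 + X v21 * X v10
    else if v = v32 then X v32 + X v20 else X v

def ψm : MvPolynomial SIx K →ₐ[K] MvPolynomial SIx K :=
  aeval fun v => if v = v20 then X v20 - X v21 * X v10
    else if v = v32 then X v32 - X v20 + X v21 * X v10 else X v

def Gmv : MvPolynomial SIx K := X v32 * X v20 + X v31 * X v10 - X v32 * X v21 * X v10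
def Hmv : MvPolynomial SIx K := X v20 ^ 2 + X v32 * X v20 + X v31 * X v10
def Dmv : MvPolynomial SIx K := X v32 ^ 2 - 4 * (X v31 * X v10)

end AuxAlg

noncomputable section AuxAlg2

variable {K : Type} [Field K]

lemma psim_phim (g : MvPolynomial SIx K) : ψm (φm g) = g := by
  have h : (ψm (K := K)).comp (φm (K := K)) = AlgHom.id K _ := by
    apply MvPolynomial.algHom_ext
    intro v
    by_cases h1 : v = v20
    · subst h1
      simp (config := { decide := true }) only [AlgHom.coe_comp, Function.comp_apply,
        AlgHom.coe_id, id_eq, φm, ψm, aeval_X, map_add, map_sub, _root_.map_mul,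
        if_true, if_false]
      ring
    · by_cases h2 : v = v32
      · subst h2
        simp (config := { decide := true }) only [AlgHom.coe_comp, Function.comp_apply,
          AlgHom.coe_id, id_eq, φm, ψm, aeval_X, map_add, map_sub, _root_.map_mul,
          if_true, if_false]
        ring
      · simp only [AlgHom.coe_comp, Function.comp_apply, AlgHom.coe_id, id_eq, φm, ψm, aeval_X]
        rw [if_neg h1, if_neg h2, aeval_X, if_neg h1, if_neg h2]
  calc ψm (φm g) = (ψm.comp φm) g := rfl
  _ = g := by rw [h]; rfl

lemma phim_Gmv : φm (Gmv : MvPolynomial SIx K) = Hmv := by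
  simp (config := { decide := true }) only [Gmv, Hmv, map_add, map_sub, _root_.map_mul,
    map_pow, φm, aeval_X, if_true, if_false]
  ring

lemma psim_Hmv : ψm (Hmv : MvPolynomial SIx K) = Gmv := by
  simp (config := { decide := true }) only [Gmv, Hmv, map_add, map_sub, _root_.map_mul,
    map_pow, ψm, aeval_X, if_true, if_false]
  ring

lemma eval_aeval'_s6 (y : SIx → K) (s : SIx → MvPolynomial SIx K) (g : MvPolynomial SIx K) :
    eval y (aeval s g) = eval (fun v => eval y (s v)) g := by
  rw [aeval_def, ← eval₂_id (g := fun v => eval y (s v))]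
  rw [MvPolynomial.eval₂_comp_left (eval y) (algebraMap K _) s g]
  congr 1
  ext a
  simp [MvPolynomial.algebraMap_eq]

lemma sigma_sigma (g : MvPolynomial SIx K) : σm (σm g) = σm g := by
  have h : (σm (K := K)).comp σm = σm := by
    apply MvPolynomial.algHom_ext
    intro v
    by_cases h1 : v = v30
    · subst h1; simp [σm, aeval_X]
    · simp [σm, aeval_X, if_neg h1]
  exact DFunLike.congr_fun h g

lemma tau_sigma (g : MvPolynomial SIx K) : τm (σm g) = σm (τm g) := by
  have h : (τm (K := K)).comp σm = (σm (K := K)).comp τm := by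
    apply MvPolynomial.algHom_ext
    intro v
    by_cases h1 : v = v30
    · subst h1
      simp (config := { decide := true }) [σm, τm, aeval_X]
    · by_cases h2 : v = v20
      · subst h2
        simp (config := { decide := true }) [σm, τm, aeval_X]
      · simp [σm, τm, aeval_X, if_neg h1, if_neg h2]
  exact DFunLike.congr_fun h g

lemma sigma_phim (g : MvPolynomial SIx K) : σm (φm g) = φm (σm g) := by
  have h : (σm (K := K)).comp φm = (φm (K := K)).comp σm := by
    apply MvPolynomial.algHom_ext
    intro v
    by_cases h1 : v = v30
    · subst h1
      simp (config := { decide := true }) [σm, φm, aeval_X]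
    · by_cases h2 : v = v20
      · subst h2
        simp (config := { decide := true }) [σm, φm, aeval_X, map_add, _root_.map_mul]
      · by_cases h3 : v = v32
        · subst h3
          simp (config := { decide := true }) [σm, φm, aeval_X, map_add]
        · simp [σm, φm, aeval_X, if_neg h1, if_neg h2, if_neg h3]
  exact DFunLike.congr_fun h g

lemma eval_tau_inv (p : MvPolynomial SIx K) (hp : τm p = p) (y : SIx → K) :
    eval y p = eval (Function.update y v20 0) p := by
  conv_lhs => rw [← hp]
  rw [show (τm (K := K)) p = aeval (fun v => if v = v20 then 0 else X v) p from rfl,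
    eval_aeval'_s6]
  have h : (fun v => eval y (if v = v20 then 0 else X v)) = Function.update y v20 0 := by
    funext v
    by_cases h : v = v20
    · subst h; simp
    · simp [if_neg h, Function.update_of_ne h]
  rw [h]

lemma eval_sigma_inv (p : MvPolynomial SIx K) (hp : σm p = p) (y : SIx → K) :
    eval y p = eval (Function.update y v30 0) p := by
  conv_lhs => rw [← hp]
  rw [show (σm (K := K)) p = aeval (fun v => if v = v30 then 0 else X v) p from rfl,
    eval_aeval'_s6]
  have h : (fun v => eval y (if v = v30 then 0 else X v)) = Function.update y v30 0 := by
    funext v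
    by_cases h : v = v30
    · subst h; simp
    · simp [if_neg h, Function.update_of_ne h]
  rw [h]

def ι : MvPolynomial (Fin 5) K →ₐ[K] MvPolynomial SIx K := aeval fun k => X (vlist k)

def EIso : MvPolynomial SIx K ≃ₐ[K] Polynomial (MvPolynomial (Fin 5) K) :=
  (renameEquiv K eS).trans (optionEquivLeft K (Fin 5))

lemma EIso_X20 : EIso (X v20 : MvPolynomial SIx K) = Polynomial.X := by
  have h : eS v20 = none := by decide
  simp [EIso, AlgEquiv.trans_apply, renameEquiv_apply, rename_X, h, optionEquivLeft_X_none]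

lemma EIso_Xv (k : Fin 5) : EIso (X (vlist k) : MvPolynomial SIx K) = Polynomial.C (X k) := by
  have h : eS (vlist k) = some k := by fin_cases k <;> decide
  simp [EIso, AlgEquiv.trans_apply, renameEquiv_apply, rename_X, h, optionEquivLeft_X_some]

lemma EIso_symm_C (a : MvPolynomial (Fin 5) K) : EIso.symm (Polynomial.C a) = ι a := by
  have h : ((EIso (K := K)).symm.toAlgHom.comp Polynomial.CAlgHom) = (ι (K := K)) := by
    apply MvPolynomial.algHom_ext
    intro k
    simp only [AlgHom.coe_comp, AlgEquiv.toAlgHom_eq_coe, AlgEquiv.coe_algHom,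
      Function.comp_apply, Polynomial.CAlgHom_apply, ι, aeval_X]
    rw [← EIso_Xv k]
    exact (EIso (K := K)).symm_apply_apply _
  exact DFunLike.congr_fun h a

lemma tau_iota (a : MvPolynomial (Fin 5) K) : τm (ι a) = ι a := by
  have h : (τm (K := K)).comp ι = (ι (K := K)) := by
    apply MvPolynomial.algHom_ext
    intro k
    simp only [AlgHom.coe_comp, Function.comp_apply, ι, aeval_X, τm]
    rw [if_neg (show ¬(vlist k = v20) by fin_cases k <;> decide)]
  exact DFunLike.congr_fun h a

lemma EIso_Hmv : EIso (Hmv : MvPolynomial SIx K) =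
    Polynomial.X ^ 2 + Polynomial.C (X 4) * Polynomial.X + Polynomial.C (X 3 * X 0) := by
  have h32 : (v32 : SIx) = vlist 4 := by decide
  have h31 : (v31 : SIx) = vlist 3 := by decide
  have h10 : (v10 : SIx) = vlist 0 := by decide
  simp only [Hmv, map_add, _root_.map_mul, map_pow, EIso_X20, h32, h31, h10, EIso_Xv]

lemma division (g : MvPolynomial SIx K) :
    ∃ q r1 r0 : MvPolynomial SIx K, g = Hmv * q + X v20 * r1 + r0 ∧
      τm r1 = r1 ∧ τm r0 = r0 := by
  classical
  set Hp : Polynomial (MvPolynomial (Fin 5) K) :=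
    Polynomial.X ^ 2 + Polynomial.C (X 4) * Polynomial.X + Polynomial.C (X 3 * X 0) with hHp
  have hlin : (Polynomial.C (X 4 : MvPolynomial (Fin 5) K) * Polynomial.X +
      Polynomial.C (X 3 * X 0)).degree < 2 :=
    lt_of_le_of_lt Polynomial.degree_linear_le (by norm_num)
  have hmonic : Hp.Monic := by
    rw [hHp, add_assoc]
    exact Polynomial.monic_X_pow_add hlin
  have hHpdeg : Hp.degree = 2 := by
    rw [hHp, add_assoc, Polynomial.degree_add_eq_left_of_degree_lt
      (by rw [Polynomial.degree_X_pow]; exact_mod_cast hlin), Polynomial.degree_X_pow]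
    norm_cast
  set F := EIso (K := K) g with hF
  have hdiv : F %ₘ Hp + Hp * (F /ₘ Hp) = F := Polynomial.modByMonic_add_div F Hp
  set r := F %ₘ Hp with hr
  have hne1 : Hp ≠ 1 := by
    intro h
    rw [h] at hHpdeg
    simp [Polynomial.degree_one] at hHpdeg
  have hnd : Hp.natDegree = 2 := Polynomial.natDegree_eq_of_degree_eq_some hHpdeg
  have h2 : r.natDegree < 2 := by
    rw [← hnd]; exact Polynomial.natDegree_modByMonic_lt F hmonic hne1
  have hdeg : r.degree ≤ 1 := le_trans Polynomial.degree_le_natDegree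
    (by exact_mod_cast Nat.lt_succ_iff.mp h2)
  obtain ⟨c1, c0, hr_eq⟩ : ∃ c1 c0, r = Polynomial.C c1 * Polynomial.X + Polynomial.C c0 :=
    ⟨_, _, Polynomial.eq_X_add_C_of_degree_le_one hdeg⟩
  refine ⟨EIso.symm (F /ₘ Hp), ι c1, ι c0, ?_, tau_iota _, tau_iota _⟩
  have h1 := congrArg (EIso (K := K)).symm hdiv
  rw [map_add, _root_.map_mul, hF, AlgEquiv.symm_apply_apply] at h1
  rw [← h1, hr_eq, map_add, _root_.map_mul, EIso_symm_C, EIso_symm_C]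
  have hX : (EIso (K := K)).symm Polynomial.X = X v20 := by
    rw [← EIso_X20, AlgEquiv.symm_apply_apply]
  have hHmv : (EIso (K := K)).symm Hp = Hmv := by
    rw [hHp, ← EIso_Hmv, AlgEquiv.symm_apply_apply]
  rw [hX, hHmv]
  ring

lemma sigma_X20 : σm (X v20 : MvPolynomial SIx K) = X v20 := by
  simp (config := { decide := true }) [σm, aeval_X]

lemma sub_sigma_mem (f : MvPolynomial SIx K) :
    f - σm f ∈ Ideal.span ({X v30} : Set (MvPolynomial SIx K)) := by
  induction f using MvPolynomial.induction_on with
  | C a =>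
      rw [show (σm (K := K)) (C a) = C a by simp [σm, aeval_C, algebraMap_eq]]
      simp
  | add p q hp hq =>
      have h : p + q - σm (p + q) = (p - σm p) + (q - σm q) := by rw [map_add]; ring
      rw [h]; exact Ideal.add_mem _ hp hq
  | mul_X p v hp =>
      by_cases hv : v = v30
      · subst hv
        have h : p * X v30 - σm (p * X v30) = p * X v30 := by
          rw [_root_.map_mul, show (σm (K := K)) (X v30) = 0 by simp [σm, aeval_X]]
          ring
        rw [h]
        exact Ideal.mul_mem_left _ _ (Ideal.subset_span (Set.mem_singleton _))
      · have h : p * X v - σm (p * X v) = (p - σm p) * X v := by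
          rw [_root_.map_mul, show (σm (K := K)) (X v) = X v by simp [σm, aeval_X, if_neg hv]]
          ring
        rw [h]
        exact Ideal.mul_mem_right _ _ hp

lemma Dmv_ne_zero : (Dmv : MvPolynomial SIx K) ≠ 0 := by
  intro h
  have h2 := congrArg (eval (fun v : SIx => if v = v32 then (1 : K) else 0)) h
  simp (config := { decide := true }) [Dmv] at h2

lemma span_of_vanish [IsAlgClosed K] [CharZero K]
    (f : MvPolynomial SIx K)
    (H : ∀ z : SIx → K, z v30 = 0 →
      z v32 * z v20 + z v31 * z v10 - z v32 * z v21 * z v10 = 0 →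
      eval z f = 0) :
    f ∈ Ideal.span ({X v30, Gmv} : Set (MvPolynomial SIx K)) := by
  classical
  set f1 := σm f with hf1
  have hσf1 : σm f1 = f1 := sigma_sigma f
  set f2 := φm f1 with hf2
  obtain ⟨q, r1', r0', heq, hτ1, hτ0⟩ := division (K := K) f2
  have hσHmv : σm (Hmv : MvPolynomial SIx K) = Hmv := by
    simp (config := { decide := true }) only [Hmv, map_add, _root_.map_mul, map_pow, σm,
      aeval_X, if_false]
  have hσf2 : σm f2 = f2 := by rw [hf2, sigma_phim, hσf1]
  set r1 := σm r1' with hr1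
  set r0 := σm r0' with hr0
  have heq2 : f2 = Hmv * σm q + X v20 * r1 + r0 := by
    conv_lhs => rw [← hσf2, heq]
    rw [map_add, map_add, _root_.map_mul, _root_.map_mul, hσHmv, sigma_X20]
  have hτr1 : τm r1 = r1 := by rw [hr1, tau_sigma, hτ1]
  have hτr0 : τm r0 = r0 := by rw [hr0, tau_sigma, hτ0]
  -- f2 vanishes at any point where Hmv vanishes
  have hvan2 : ∀ y : SIx → K, eval y Hmv = 0 → eval y f2 = 0 := by
    intro y hH
    have e1 : eval y f2 = eval (fun v => eval y (if v = v20 then X v20 + X v21 * X v10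
        else if v = v32 then X v32 + X v20 else X v)) f1 := by
      rw [hf2, show (φm (K := K)) f1 = aeval _ f1 from rfl, eval_aeval'_s6]
    set y2 : SIx → K := fun v => eval y (if v = v20 then X v20 + X v21 * X v10
        else if v = v32 then X v32 + X v20 else X v) with hy2
    have e2 : eval y2 f1 = eval (fun v => eval y2 (if v = v30 then 0 else X v)) f := by
      rw [hf1, show (σm (K := K)) f = aeval _ f from rfl, eval_aeval'_s6]
    set z : SIx → K := fun v => eval y2 (if v = v30 then 0 else X v) with hz
    have hz30 : z v30 = 0 := by simp [hz]
    have hGy2 : eval y2 Gmv = 0 := by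
      have e3 : eval y (φm (Gmv : MvPolynomial SIx K)) = eval y2 Gmv := by
        rw [show (φm (K := K)) Gmv = aeval _ Gmv from rfl, eval_aeval'_s6]
      rw [← e3, phim_Gmv, hH]
    have hzv : ∀ v : SIx, v ≠ v30 → z v = y2 v := by
      intro v hv
      simp [hz, if_neg hv]
    have hrelz : z v32 * z v20 + z v31 * z v10 - z v32 * z v21 * z v10 = 0 := by
      rw [hzv v32 (by decide), hzv v20 (by decide), hzv v31 (by decide),
        hzv v10 (by decide), hzv v21 (by decide)]
      simpa [Gmv] using hGy2
    rw [e1, e2]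
    exact H z hz30 hrelz
  -- pointwise vanishing of r1 r0 off the discriminant
  have hpoint : ∀ y : SIx → K, eval y Dmv ≠ 0 → eval y r1 = 0 ∧ eval y r0 = 0 := by
    intro y hD
    have hx : ∀ u0 : K, u0 ^ 2 + y v32 * u0 + y v31 * y v10 = 0 →
        u0 * eval y r1 + eval y r0 = 0 := by
      intro u0 h0
      set Y : SIx → K := Function.update y v20 u0 with hY
      have hYv : ∀ v : SIx, v ≠ v20 → Y v = y v := by
        intro v hv
        simp [hY, Function.update_apply, if_neg hv]
      have hY20 : Y v20 = u0 := by simp [hY]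
      have hHY : eval Y Hmv = 0 := by
        have e4 : eval Y Hmv = u0 ^ 2 + y v32 * u0 + y v31 * y v10 := by
          simp only [Hmv, map_add, _root_.map_mul, map_pow, eval_X, hY20,
            hYv v32 (by decide), hYv v31 (by decide), hYv v10 (by decide)]
        rw [e4, h0]
      have h2 := hvan2 Y hHY
      rw [heq2] at h2
      simp only [map_add, _root_.map_mul, eval_X, hHY, hY20, zero_mul] at h2
      have hevr1 : eval Y r1 = eval y r1 := by
        rw [eval_tau_inv r1 hτr1 Y, eval_tau_inv r1 hτr1 y, hY, Function.update_idem]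
      have hevr0 : eval Y r0 = eval y r0 := by
        rw [eval_tau_inv r0 hτr0 Y, eval_tau_inv r0 hτr0 y, hY, Function.update_idem]
      rw [hevr1, hevr0] at h2
      linear_combination h2
    have hdeg2 : (Polynomial.X ^ 2 + Polynomial.C (y v32) * Polynomial.X +
        Polynomial.C (y v31 * y v10) : Polynomial K).degree ≠ 0 := by
      rw [add_assoc, Polynomial.degree_add_eq_left_of_degree_lt
        (by rw [Polynomial.degree_X_pow]
            exact lt_of_le_of_lt Polynomial.degree_linear_le (by norm_num)),
        Polynomial.degree_X_pow]
      norm_num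
    obtain ⟨u, hu⟩ := IsAlgClosed.exists_root _ hdeg2
    have hu1 : u ^ 2 + y v32 * u + y v31 * y v10 = 0 := by
      simpa [Polynomial.IsRoot] using hu
    have hu2 : (-(y v32) - u) ^ 2 + y v32 * (-(y v32) - u) + y v31 * y v10 = 0 := by
      linear_combination hu1
    have hne : u ≠ -(y v32) - u := by
      intro h
      apply hD
      have e5 : eval y Dmv = y v32 ^ 2 - 4 * (y v31 * y v10) := by simp [Dmv]
      have h' : 2 * u + y v32 = 0 := by linear_combination h
      rw [e5]
      linear_combination (y v32 + 2 * u) * h' - 4 * hu1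
    have hA := hx u hu1
    have hB := hx (-(y v32) - u) hu2
    have hr1y : eval y r1 = 0 := by
      have h6 : (u - (-(y v32) - u)) * eval y r1 = 0 := by linear_combination hA - hB
      exact (mul_eq_zero.mp h6).resolve_left (sub_ne_zero.mpr hne)
    refine ⟨hr1y, ?_⟩
    linear_combination hA - u * hr1y
  have hr1z : r1 = 0 := by
    have h7 : (Dmv : MvPolynomial SIx K) * r1 = 0 := by
      apply MvPolynomial.funext
      intro y
      by_cases hDy : eval y Dmv = 0
      · simp [hDy]
      · simp [(hpoint y hDy).1]
    exact (mul_eq_zero.mp h7).resolve_left Dmv_ne_zero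
  have hr0z : r0 = 0 := by
    have h7 : (Dmv : MvPolynomial SIx K) * r0 = 0 := by
      apply MvPolynomial.funext
      intro y
      by_cases hDy : eval y Dmv = 0
      · simp [hDy]
      · simp [(hpoint y hDy).2]
    exact (mul_eq_zero.mp h7).resolve_left Dmv_ne_zero
  have hf2q : f2 = Hmv * σm q := by rw [heq2, hr1z, hr0z]; ring
  have hf1G : f1 = Gmv * ψm (σm q) := by
    have h8 := congrArg (ψm (K := K)) hf2q
    rw [hf2, psim_phim f1, _root_.map_mul, psim_Hmv] at h8
    exact h8
  have h9 : f = (f - σm f) + f1 := by rw [hf1]; ring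
  rw [h9]
  refine Ideal.add_mem _ (Ideal.span_mono (by simp) (sub_sigma_mem f)) ?_
  rw [hf1G]
  exact Ideal.mul_mem_right _ _ (Ideal.subset_span (by simp))

end AuxAlg2

lemma V_mem_schubert {K : Type} [Field K] [CharZero K] (z : SIx → K) (hz30 : z v30 = 0)
    (hzrel : z v32 * z v20 + z v31 * z v10 - z v32 * z v21 * z v10 = 0) :
    (Matrix.of fun i j : Fin 4 => if h : (j < i) then z ⟨(i, j), h⟩ else 0) ∈
      schubertAffine (K := K) w4 := by
  constructor
  · intro i j hij
    simp [Matrix.of_apply, dif_neg (not_lt.mpr hij)]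
  · intro f0 hf0
    have hM : (1 : Matrix (Fin 4) (Fin 4) K) +
        (Matrix.of fun i j : Fin 4 => if h : (j < i) then z ⟨(i, j), h⟩ else 0) =
        !![1,0,0,0; z v10,1,0,0; z v20, z v21,1,0; (0:K), z v31, z v32,1] := by
      ext i j
      fin_cases i <;> fin_cases j <;>
        simp (config := { decide := true }) [Matrix.add_apply, Matrix.one_apply,
          Matrix.cons_val_one, Matrix.cons_val_two, Matrix.cons_val_three, Matrix.head_cons,
          Matrix.tail_cons, Matrix.cons_val_zero, Matrix.vecHead, Matrix.vecTail,
          v10, v20, v21, v30, v31, v32] <;>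
        first
          | rfl
          | (exact hz30)
    rw [hM]
    exact mem_schubert _ _ _ _ _ hzrel f0 hf0

/-- For `n = 4` and `w = (13)(24)`, the vanishing ideal of the affine part `Ω_w`
inside the polynomial ring `K[x_{ij} : i > j]` (variables indexed by the strictly
lower positions) is generated by `x₄₁` and `x₄₃ x₃₁ + x₄₂ x₂₁ − x₄₃ x₃₂ x₂₁`
(indices here are 0-based). -/
theorem vanishingIdeal_A3_13_24 {K : Type} [Field K] [IsAlgClosed K] [CharZero K] :
    {f : MvPolynomial {p : Fin 4 × Fin 4 // p.2 < p.1} K |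
        ∀ x ∈ schubertAffine (K := K) (Equiv.swap (0 : Fin 4) 2 * Equiv.swap (1 : Fin 4) 3),
          MvPolynomial.eval (fun p => x p.1.1 p.1.2) f = 0} =
      ↑(Ideal.span ({X ⟨(3, 0), by decide⟩,
          X ⟨(3, 2), by decide⟩ * X ⟨(2, 0), by decide⟩
            + X ⟨(3, 1), by decide⟩ * X ⟨(1, 0), by decide⟩
            - X ⟨(3, 2), by decide⟩ * X ⟨(2, 1), by decide⟩ * X ⟨(1, 0), by decide⟩} :
          Set (MvPolynomial {p : Fin 4 × Fin 4 // p.2 < p.1} K))) := by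
  ext f
  simp only [Set.mem_setOf_eq, SetLike.mem_coe]
  constructor
  · intro hf
    apply span_of_vanish f
    intro z h30 hrel
    have hmem := V_mem_schubert (K := K) z h30 hrel
    have hfx := hf _ hmem
    have hfun : (fun p : SIx => (Matrix.of fun i j : Fin 4 =>
        if h : (j < i) then z ⟨(i, j), h⟩ else 0) p.1.1 p.1.2) = z := by
      funext v
      obtain ⟨⟨i, j⟩, hv⟩ := v
      simp [Matrix.of_apply, dif_pos hv]
    rwa [hfun] at hfx
  · intro hf x hx
    obtain ⟨hlow, hcl⟩ := hx
    have z11 := hlow 1 1 (le_refl _)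
    have z22 := hlow 2 2 (le_refl _)
    have z12 := hlow 1 2 (by decide)
    have h30 : x 3 0 = 0 := by
      have h := hcl _ cell_P1
      simpa [evalMat, Matrix.add_apply, Matrix.one_apply] using h
    have hmin := hcl _ cell_P2
    simp only [evalMat, P2big, map_add, map_sub, _root_.map_mul, eval_X,
      Matrix.add_apply, Matrix.one_apply] at hmin
    simp (config := { decide := true }) only [if_true, if_false, z11, z22, z12,
      add_zero, zero_add, mul_one, one_mul, mul_zero, zero_mul] at hmin
    have hker : Ideal.span ({X ⟨((3 : Fin 4), (0 : Fin 4)), by decide⟩,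
          X ⟨((3 : Fin 4), (2 : Fin 4)), by decide⟩ * X ⟨((2 : Fin 4), (0 : Fin 4)), by decide⟩
            + X ⟨((3 : Fin 4), (1 : Fin 4)), by decide⟩ * X ⟨((1 : Fin 4), (0 : Fin 4)), by decide⟩
            - X ⟨((3 : Fin 4), (2 : Fin 4)), by decide⟩ * X ⟨((2 : Fin 4), (1 : Fin 4)), by decide⟩
              * X ⟨((1 : Fin 4), (0 : Fin 4)), by decide⟩} :
          Set (MvPolynomial SIx K)) ≤
        RingHom.ker (MvPolynomial.eval (fun p : SIx => x p.1.1 p.1.2)) := by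
      rw [Ideal.span_le]
      rintro g hg
      simp only [Set.mem_insert_iff, Set.mem_singleton_iff] at hg
      rcases hg with rfl | rfl
      · simp only [SetLike.mem_coe, RingHom.mem_ker, eval_X]
        exact h30
      · simp only [SetLike.mem_coe, RingHom.mem_ker, map_add, map_sub, _root_.map_mul, eval_X]
        linear_combination (-1 : K) * hmin + h30
    exact hker hf
end
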